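/- arXiv:1607.07282 — 3 statements merged into one kernel-verified Lean document; each statement's English description precedes it below -/
import Mathlib

section
/- Let N ⊂ ℝ^k be a smooth compact submanifold and f : ℝ^k → [0,∞) smooth with {f = 0} = N and nondegenerate Hessian in normal directions along N. Then for every bounded set B ⊂ ℝ^k there exist δ > 0 and C > 0 such that for all z ∈ B with dist(z,N) < δ, |∇f(z)| ≤ C √(f(z)). -/
open scoped BigOperators

open Filter Metric Set Topology

section Aux

variable {E : Type*} [NormedAddCommGroup E] [NormedSpace ℝ E]

/-- If the second derivative of `f` along the segment from `p` to `p + w` is at least `β ≥ 0`,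
`fderiv ℝ f p = 0`, and `f ≥ 0`, then `f (p + w) ≥ β / 4`. -/
lemma aux_lower_bound (f : E → ℝ) (hf : ContDiff ℝ (⊤ : ℕ∞) f) (hpos : ∀ y, 0 ≤ f y) (p w : E)
    (hf0 : fderiv ℝ f p = 0) (β : ℝ) (hβ0 : 0 ≤ β)
    (hβ : ∀ s ∈ Set.Icc (0:ℝ) 1, β ≤ fderiv ℝ (fderiv ℝ f) (p + s • w) w w) :
    β / 4 ≤ f (p + w) := by
  set c : ℝ → E := fun s => p + s • w with hc_def
  have hc : ∀ s : ℝ, HasDerivAt c w s := by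
    intro s
    have h := ((hasDerivAt_id s).smul_const w).const_add p
    simp only [one_smul] at h
    exact h
  have hdf : Differentiable ℝ f := hf.differentiable (by simp)
  have hf1 : ContDiff ℝ (⊤ : ℕ∞) (fderiv ℝ f) := hf.fderiv_right (by simp)
  have hdf1 : Differentiable ℝ (fderiv ℝ f) := hf1.differentiable (by simp)
  set g : ℝ → ℝ := fun s => f (c s) with hg_def
  set g' : ℝ → ℝ := fun s => fderiv ℝ f (c s) w with hg'_def
  set g'' : ℝ → ℝ := fun s => fderiv ℝ (fderiv ℝ f) (c s) w w with hg''_def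
  have hg : ∀ s, HasDerivAt g (g' s) s := fun s =>
    (hdf (c s)).hasFDerivAt.comp_hasDerivAt s (hc s)
  have hg' : ∀ s, HasDerivAt g' (g'' s) s := by
    intro s
    have h1 : HasDerivAt (fun u => fderiv ℝ f (c u)) (fderiv ℝ (fderiv ℝ f) (c s) w) s :=
      (hdf1 (c s)).hasFDerivAt.comp_hasDerivAt s (hc s)
    have h2 := h1.clm_apply (hasDerivAt_const s w)
    simpa using h2
  have hgc : Continuous g := by
    rw [continuous_iff_continuousAt]; exact fun s => (hg s).continuousAt
  have hg'c : Continuous g' := by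
    rw [continuous_iff_continuousAt]; exact fun s => (hg' s).continuousAt
  have hg'0 : g' 0 = 0 := by simp [hg'_def, hc_def, hf0]
  obtain ⟨η, hη, hηeq⟩ := exists_hasDerivAt_eq_slope g g' (by norm_num : (1:ℝ)/2 < 1)
    hgc.continuousOn (fun u _ => hg u)
  have hη0 : (0:ℝ) < η := by linarith [hη.1]
  obtain ⟨ξ, hξ, hξeq⟩ := exists_hasDerivAt_eq_slope g' g'' hη0
    hg'c.continuousOn (fun u _ => hg' u)
  have hξmem : ξ ∈ Set.Icc (0:ℝ) 1 := ⟨hξ.1.le, by linarith [hξ.2, hη.2]⟩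
  have hβξ : β ≤ g'' ξ := hβ ξ hξmem
  rw [hg'0, sub_zero, sub_zero] at hξeq
  -- g'' ξ = g' η / η, hence β * η ≤ g' η
  have h5 : β * η ≤ g' η := by
    have : β ≤ g' η / η := hξeq ▸ hβξ
    calc β * η ≤ (g' η / η) * η := by nlinarith
      _ = g' η := by field_simp
  -- g' η = (g 1 - g (1/2)) / (1/2)
  have h6 : g 1 - g (1/2) = g' η * (1/2) := by
    rw [hηeq]; ring
  have h7 : 0 ≤ g (1/2) := hpos _
  have h8 : g 1 = f (p + w) := by simp [hg_def, hc_def]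
  have h9 : β * (1/2) ≤ g' η := by nlinarith [hη.1, hη.2]
  nlinarith [h5, h6, h7, h9]

end Aux

set_option maxHeartbeats 2000000 in
/-- Let `N = {f = 0}` be the compact vacuum manifold of the smooth
nonnegative potential `f`, vanishing nondegenerately on `N` (Hessian positive definite
on normal directions, the normal space at `x ∈ N` being `ker Dπ(x)` for the
nearest-point projection `π`).  Then for every bounded set `B ⊂ ℝ^k` there exist
`δ > 0` and `C > 0` such that `|∇f(z)| ≤ C √(f(z))` for all `z ∈ B` with
`dist(z, N) < δ`. -/
theorem grad_potential_le_sqrt_potential {k : ℕ}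
    (N : Set (EuclideanSpace ℝ (Fin k))) (hN : IsCompact N)
    (f : EuclideanSpace ℝ (Fin k) → ℝ) (hf : ContDiff ℝ (⊤ : ℕ∞) f)
    (hfpos : ∀ z, 0 ≤ f z) (hzero : {z | f z = 0} = N)
    (δ₁ : ℝ) (hδ₁ : 0 < δ₁)
    (π : EuclideanSpace ℝ (Fin k) → EuclideanSpace ℝ (Fin k))
    (hπN : ∀ z, Metric.infDist z N < δ₁ →
      π z ∈ N ∧ dist z (π z) = Metric.infDist z N)
    (hπs : ContDiffOn ℝ (⊤ : ℕ∞) π {z | Metric.infDist z N < δ₁})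
    (hnondeg : ∀ x ∈ N, ∀ v : EuclideanSpace ℝ (Fin k),
      fderiv ℝ π x v = 0 → v ≠ 0 → 0 < iteratedFDeriv ℝ 2 f x ![v, v]) :
    ∀ B : Set (EuclideanSpace ℝ (Fin k)), Bornology.IsBounded B →
      ∃ δ > 0, ∃ C > 0, ∀ z ∈ B, Metric.infDist z N < δ →
        ‖gradient f z‖ ≤ C * Real.sqrt (f z) := by
  intro B hB
  by_contra hcon
  push_neg at hcon
  -- gradient basics
  have grad_norm : ∀ y : EuclideanSpace ℝ (Fin k), ‖gradient f y‖ = ‖fderiv ℝ f y‖ := fun y =>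
    (InnerProductSpace.toDual ℝ (EuclideanSpace ℝ (Fin k))).symm.norm_map (fderiv ℝ f y)
  have hfderiv0 : ∀ y : EuclideanSpace ℝ (Fin k), f y = 0 → fderiv ℝ f y = 0 := by
    intro y hy
    have hmin : IsLocalMin f y :=
      Filter.Eventually.of_forall (fun u => by rw [hy]; exact hfpos u)
    exact hmin.fderiv_eq_zero
  -- extract a bad sequence
  have key : ∀ n : ℕ, ∃ w, w ∈ B ∧ Metric.infDist w N < min δ₁ (1/(n+1)) ∧
      ((n:ℝ)+1) * Real.sqrt (f w) < ‖gradient f w‖ := by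
    intro n
    have h1 : (0:ℝ) < min δ₁ (1/(n+1)) := lt_min hδ₁ (by positivity)
    obtain ⟨w, hw1, hw2, hw3⟩ := hcon _ h1 ((n:ℝ)+1) (by positivity)
    exact ⟨w, hw1, hw2, hw3⟩
  choose z hzB hzd hzi using key
  set p : ℕ → EuclideanSpace ℝ (Fin k) := fun n => π (z n) with hp_def
  set t : ℕ → ℝ := fun n => dist (z n) (p n) with ht_def
  have hzδ₁ : ∀ n, Metric.infDist (z n) N < δ₁ := fun n => (hzd n).trans_le (min_le_left _ _)
  have hpN : ∀ n, p n ∈ N := fun n => (hπN _ (hzδ₁ n)).1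
  have hteq : ∀ n, t n = Metric.infDist (z n) N := fun n => (hπN _ (hzδ₁ n)).2
  have htlt : ∀ n, t n < 1/((n:ℝ)+1) := by
    intro n
    rw [hteq n]
    exact (hzd n).trans_le (min_le_right _ _)
  have hfp0 : ∀ n, f (p n) = 0 := by
    intro n
    have h := hpN n
    rw [← hzero] at h
    exact h
  have htpos : ∀ n, 0 < t n := by
    intro n
    rcases (dist_nonneg : 0 ≤ t n).lt_or_eq with h | h
    · exact h
    · exfalso
      have hzp : z n = p n := dist_eq_zero.mp h.symm
      have hfz : f (z n) = 0 := by rw [hzp]; exact hfp0 n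
      have h2 := hzi n
      rw [hfz, Real.sqrt_zero, mul_zero, grad_norm, hfderiv0 _ hfz, norm_zero] at h2
      exact lt_irrefl 0 h2
  -- first subsequence : p converges to x ∈ N
  obtain ⟨x, hxN, φ, hφmono, hφlim⟩ := hN.tendsto_subseq hpN
  have ht0 : Tendsto t atTop (𝓝 0) :=
    tendsto_of_tendsto_of_tendsto_of_le_of_le tendsto_const_nhds
      tendsto_one_div_add_atTop_nhds_zero_nat (fun n => dist_nonneg) (fun n => (htlt n).le)
  -- unit normal-ish vectors
  set v : ℕ → EuclideanSpace ℝ (Fin k) := fun n => (t n)⁻¹ • (z n - p n) with hv_def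
  have hzpnorm : ∀ n, ‖z n - p n‖ = t n := by
    intro n
    rw [ht_def]
    exact (dist_eq_norm _ _).symm
  have hvnorm : ∀ n, ‖v n‖ = 1 := by
    intro n
    rw [hv_def]
    simp only [norm_smul, Real.norm_eq_abs, abs_inv, abs_of_pos (htpos n)]
    rw [hzpnorm n]
    exact inv_mul_cancel₀ (htpos n).ne'
  have hwv : ∀ n, z n - p n = t n • v n := by
    intro n
    rw [hv_def, smul_inv_smul₀ (htpos n).ne']
  -- second subsequence: v converges to vlim on the unit sphere
  have hvmem : ∀ n, v (φ n) ∈ Metric.sphere (0 : EuclideanSpace ℝ (Fin k)) 1 := fun n => by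
    rw [mem_sphere_zero_iff_norm]; exact hvnorm _
  obtain ⟨vlim, hvlimmem, φ₂, hφ₂mono, hvlim⟩ :=
    (isCompact_sphere (0 : EuclideanSpace ℝ (Fin k)) 1).tendsto_subseq hvmem
  set ψ : ℕ → ℕ := fun n => φ (φ₂ n) with hψ_def
  have hψmono : StrictMono ψ := hφmono.comp hφ₂mono
  have hpψ : Tendsto (fun n => p (ψ n)) atTop (𝓝 x) := hφlim.comp hφ₂mono.tendsto_atTop
  have htψ : Tendsto (fun n => t (ψ n)) atTop (𝓝 0) := ht0.comp hψmono.tendsto_atTop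
  have hvψ : Tendsto (fun n => v (ψ n)) atTop (𝓝 vlim) := hvlim
  have hvlimnorm : ‖vlim‖ = 1 := mem_sphere_zero_iff_norm.mp hvlimmem
  have hvlimne : vlim ≠ 0 := by
    intro h
    rw [h, norm_zero] at hvlimnorm
    norm_num at hvlimnorm
  -- the limiting direction is normal: fderiv π x vlim = 0
  set U : Set (EuclideanSpace ℝ (Fin k)) := {y | Metric.infDist y N < δ₁} with hU_def
  have hU : IsOpen U := isOpen_lt (Metric.continuous_infDist_pt N) continuous_const
  have hxU : x ∈ U := by
    show Metric.infDist x N < δ₁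
    rw [Metric.infDist_zero_of_mem hxN]
    exact hδ₁
  have hπdiff : ∀ y ∈ U, DifferentiableAt ℝ π y := fun y hy =>
    (hπs.differentiableOn (by simp)).differentiableAt (hU.mem_nhds hy)
  have hπfc : ContinuousOn (fderiv ℝ π) U := hπs.continuousOn_fderiv_of_isOpen hU (by simp)
  set Dπx := fderiv ℝ π x with hDπx_def
  have hDv : Dπx vlim = 0 := by
    have hεbound : ∀ ε > (0:ℝ), ‖Dπx vlim‖ ≤ ε := by
      intro ε hε
      have hca : ContinuousAt (fderiv ℝ π) x := hπfc.continuousAt (hU.mem_nhds hxU)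
      obtain ⟨r₁, hr₁pos, hr₁⟩ := Metric.continuousAt_iff.mp hca (ε/2) (by positivity)
      obtain ⟨r₂, hr₂pos, hball⟩ := Metric.isOpen_iff.mp hU x hxU
      set r := min r₁ r₂ with hr_def
      have hrpos : 0 < r := lt_min hr₁pos hr₂pos
      have ev1 : ∀ᶠ n in atTop, dist (p (ψ n)) x < r/2 :=
        (tendsto_iff_dist_tendsto_zero.mp hpψ).eventually_lt_const (by positivity)
      have ev2 : ∀ᶠ n in atTop, t (ψ n) < r/2 := htψ.eventually_lt_const (by positivity)
      have ev3 : ∀ᶠ n in atTop, dist (v (ψ n)) vlim < ε/(2*(‖Dπx‖+1)) :=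
        (tendsto_iff_dist_tendsto_zero.mp hvψ).eventually_lt_const (by positivity)
      obtain ⟨n, hn1, hn2, hn3⟩ := (ev1.and (ev2.and ev3)).exists
      have hpball : p (ψ n) ∈ Metric.ball x r := by rw [mem_ball]; linarith
      have hzball : z (ψ n) ∈ Metric.ball x r := by
        rw [mem_ball]
        have htr : dist (z (ψ n)) x ≤ dist (z (ψ n)) (p (ψ n)) + dist (p (ψ n)) x :=
          dist_triangle _ _ _
        have ht' : dist (z (ψ n)) (p (ψ n)) = t (ψ n) := rfl
        linarith
      have hmvt := (convex_ball x r).norm_image_sub_le_of_norm_hasFDerivWithin_le'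
        (f := π) (f' := fderiv ℝ π) (φ := Dπx) (C := ε/2)
        (fun y hy => ((hπdiff y (hball (ball_subset_ball (min_le_right r₁ r₂) hy))).hasFDerivAt).hasFDerivWithinAt)
        (fun y hy => by
          rw [← dist_eq_norm]
          exact (hr₁ ((mem_ball.mp hy).trans_le (min_le_left r₁ r₂))).le)
        hpball hzball
      have hπz : π (z (ψ n)) = p (ψ n) := rfl
      have hπp : π (p (ψ n)) = p (ψ n) := by
        have h4 : Metric.infDist (p (ψ n)) N < δ₁ := by
          rw [Metric.infDist_zero_of_mem (hpN _)]; exact hδ₁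
        have h5 := (hπN _ h4).2
        rw [Metric.infDist_zero_of_mem (hpN _)] at h5
        exact (dist_eq_zero.mp h5).symm
      rw [hπz, hπp, sub_self, zero_sub, norm_neg] at hmvt
      have hnorm_zp : ‖z (ψ n) - p (ψ n)‖ = t (ψ n) := hzpnorm (ψ n)
      have hDvn : ‖Dπx (v (ψ n))‖ ≤ ε/2 := by
        calc ‖Dπx (v (ψ n))‖ = (t (ψ n))⁻¹ * ‖Dπx (z (ψ n) - p (ψ n))‖ := by
              rw [show v (ψ n) = (t (ψ n))⁻¹ • (z (ψ n) - p (ψ n)) from rfl, map_smul,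
                norm_smul, Real.norm_eq_abs, abs_inv, abs_of_pos (htpos _)]
          _ ≤ (t (ψ n))⁻¹ * (ε/2 * t (ψ n)) := by
              apply mul_le_mul_of_nonneg_left _ (by positivity)
              rw [hnorm_zp] at hmvt
              exact hmvt
          _ = ε/2 := by
              rw [mul_comm (ε/2), ← mul_assoc, inv_mul_cancel₀ (htpos _).ne', one_mul]
      have hsplit : Dπx vlim = Dπx (vlim - v (ψ n)) + Dπx (v (ψ n)) := by
        rw [← map_add]; congr 1; abel
      have hvdist : ‖vlim - v (ψ n)‖ < ε/(2*(‖Dπx‖+1)) := by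
        rw [← dist_eq_norm, dist_comm]; exact hn3
      have hM : (0:ℝ) ≤ ‖Dπx‖ := norm_nonneg _
      have hop : ‖Dπx (vlim - v (ψ n))‖ ≤ ‖Dπx‖ * ‖vlim - v (ψ n)‖ := Dπx.le_opNorm _
      have hkey : ‖Dπx‖ * ‖vlim - v (ψ n)‖ ≤ ε/2 := by
        have h1 : ‖vlim - v (ψ n)‖ * (2*(‖Dπx‖+1)) < ε := by
          rw [← lt_div_iff₀ (by positivity)]
          exact hvdist
        nlinarith [norm_nonneg (vlim - v (ψ n))]
      calc ‖Dπx vlim‖ ≤ ‖Dπx (vlim - v (ψ n))‖ + ‖Dπx (v (ψ n))‖ := by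
            rw [hsplit]; exact norm_add_le _ _
        _ ≤ ε/2 + ε/2 := add_le_add (hop.trans hkey) hDvn
        _ = ε := by ring
    have hle : ‖Dπx vlim‖ ≤ 0 := by
      by_contra h
      push_neg at h
      have := hεbound (‖Dπx vlim‖/2) (by linarith)
      linarith
    exact norm_le_zero_iff.mp hle
  -- the Hessian is positive in the direction vlim
  set Bf := fderiv ℝ (fderiv ℝ f) with hBf_def
  have hα0 : iteratedFDeriv ℝ 2 f x ![vlim, vlim] = Bf x vlim vlim := by
    rw [iteratedFDeriv_two_apply]
    simp [hBf_def]
  set α := Bf x vlim vlim with hα_def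
  have hαpos : 0 < α := by
    have h := hnondeg x hxN vlim hDv hvlimne
    rwa [hα0] at h
  have hf1 : ContDiff ℝ (⊤ : ℕ∞) (fderiv ℝ f) := hf.fderiv_right (by simp)
  have hdf1 : Differentiable ℝ (fderiv ℝ f) := hf1.differentiable (by simp)
  have hBfc : Continuous Bf := hf1.continuous_fderiv (by simp)
  set M := ‖Bf x‖ with hM_def
  have hMnn : (0:ℝ) ≤ M := norm_nonneg (Bf x)
  obtain ⟨r₂, hr₂pos, hr₂⟩ := (Metric.continuousAt_iff (f := Bf) (a := x)).mp hBfc.continuousAt (α/4) (by positivity)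
  set L := M + α/4 with hL_def
  have hLpos : 0 < L := by positivity
  have hs8 : 0 < Real.sqrt (α/8) := Real.sqrt_pos.mpr (by positivity)
  obtain ⟨n₁, hn₁⟩ := exists_nat_gt (L / Real.sqrt (α/8))
  -- pick a good index
  have ev1 : ∀ᶠ n in atTop, dist (p (ψ n)) x < r₂/2 :=
    (tendsto_iff_dist_tendsto_zero.mp hpψ).eventually_lt_const (by positivity)
  have ev2 : ∀ᶠ n in atTop, t (ψ n) < r₂/2 := htψ.eventually_lt_const (by positivity)
  have ev3 : ∀ᶠ n in atTop, dist (v (ψ n)) vlim < α/(8*(M+1)) :=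
    (tendsto_iff_dist_tendsto_zero.mp hvψ).eventually_lt_const (by positivity)
  have ev4 : ∀ᶠ n in atTop, n ≥ n₁ := eventually_ge_atTop n₁
  obtain ⟨n, hn1, hn2, hn3, hn4⟩ := (ev1.and (ev2.and (ev3.and ev4))).exists
  -- notation
  have htn := htpos (ψ n)
  have hwn : z (ψ n) - p (ψ n) = t (ψ n) • v (ψ n) := hwv (ψ n)
  -- all segment points stay in the ball of radius r₂ around x
  have hseg : ∀ s ∈ Set.Icc (0:ℝ) 1, dist (p (ψ n) + s • (z (ψ n) - p (ψ n))) x < r₂ := by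
    intro s hs
    have h1 : p (ψ n) + s • (z (ψ n) - p (ψ n)) - x = (p (ψ n) - x) + s • (z (ψ n) - p (ψ n)) := by
      abel
    rw [dist_eq_norm, h1]
    have h2 : ‖(p (ψ n) - x) + s • (z (ψ n) - p (ψ n))‖ ≤
        ‖p (ψ n) - x‖ + ‖s • (z (ψ n) - p (ψ n))‖ := norm_add_le _ _
    have h3 : ‖s • (z (ψ n) - p (ψ n))‖ = s * t (ψ n) := by
      rw [norm_smul, Real.norm_eq_abs, abs_of_nonneg hs.1, hzpnorm (ψ n)]
    have h4 : s * t (ψ n) ≤ t (ψ n) := by nlinarith [hs.1, hs.2, htn]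
    have h5 : ‖p (ψ n) - x‖ < r₂/2 := by rw [← dist_eq_norm]; exact hn1
    linarith
  -- Hessian lower bound along the segment
  have hhess : ∀ s ∈ Set.Icc (0:ℝ) 1,
      (t (ψ n))^2 * (α/2) ≤ Bf (p (ψ n) + s • (z (ψ n) - p (ψ n)))
        (z (ψ n) - p (ψ n)) (z (ψ n) - p (ψ n)) := by
    intro s hs
    set ξ := p (ψ n) + s • (z (ψ n) - p (ψ n)) with hξ_def
    have hBclose : ‖Bf ξ - Bf x‖ ≤ α/4 := by
      rw [← dist_eq_norm (Bf ξ) (Bf x)]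
      exact (hr₂ (hseg s hs)).le
    have hvclose : ‖v (ψ n) - vlim‖ ≤ α/(8*(M+1)) := by
      rw [← dist_eq_norm]
      exact hn3.le
    have hexp : Bf ξ (z (ψ n) - p (ψ n)) (z (ψ n) - p (ψ n)) =
        (t (ψ n))^2 * (Bf ξ (v (ψ n)) (v (ψ n))) := by
      rw [hwn]
      simp [map_smul, smul_smul]
      ring
    have e1 : |Bf ξ (v (ψ n)) (v (ψ n)) - Bf x (v (ψ n)) (v (ψ n))| ≤ α/4 := by
      have heq : Bf ξ (v (ψ n)) (v (ψ n)) - Bf x (v (ψ n)) (v (ψ n)) =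
          ((Bf ξ - Bf x) (v (ψ n))) (v (ψ n)) := by simp
      rw [heq, ← Real.norm_eq_abs]
      calc ‖((Bf ξ - Bf x) (v (ψ n))) (v (ψ n))‖
          ≤ ‖Bf ξ - Bf x‖ * ‖v (ψ n)‖ * ‖v (ψ n)‖ := (Bf ξ - Bf x).le_opNorm₂ _ _
        _ = ‖Bf ξ - Bf x‖ := by rw [hvnorm (ψ n)]; ring
        _ ≤ α/4 := hBclose
    have e2 : |Bf x (v (ψ n)) (v (ψ n)) - α| ≤ α/4 := by
      have heq : Bf x (v (ψ n)) (v (ψ n)) - α =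
          (Bf x (v (ψ n) - vlim)) (v (ψ n)) + (Bf x vlim) (v (ψ n) - vlim) := by
        rw [hα_def]
        simp only [map_sub, ContinuousLinearMap.sub_apply]
        ring
      rw [heq]
      have b1 : ‖(Bf x (v (ψ n) - vlim)) (v (ψ n))‖ ≤ M * ‖v (ψ n) - vlim‖ := by
        calc ‖(Bf x (v (ψ n) - vlim)) (v (ψ n))‖
            ≤ ‖Bf x‖ * ‖v (ψ n) - vlim‖ * ‖v (ψ n)‖ := (Bf x).le_opNorm₂ _ _
          _ = M * ‖v (ψ n) - vlim‖ := by rw [hvnorm (ψ n)]; ring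
      have b2 : ‖(Bf x vlim) (v (ψ n) - vlim)‖ ≤ M * ‖v (ψ n) - vlim‖ := by
        calc ‖(Bf x vlim) (v (ψ n) - vlim)‖
            ≤ ‖Bf x‖ * ‖vlim‖ * ‖v (ψ n) - vlim‖ := (Bf x).le_opNorm₂ _ _
          _ = M * ‖v (ψ n) - vlim‖ := by rw [hvlimnorm]; ring
      have b3 : M * ‖v (ψ n) - vlim‖ ≤ α/8 := by
        have h' : ‖v (ψ n) - vlim‖ * (8*(M+1)) ≤ α :=
          (le_div_iff₀ (by positivity)).mp hvclose
        nlinarith [norm_nonneg (v (ψ n) - vlim), h', hMnn]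
      calc |(Bf x (v (ψ n) - vlim)) (v (ψ n)) + (Bf x vlim) (v (ψ n) - vlim)|
          ≤ |(Bf x (v (ψ n) - vlim)) (v (ψ n))| + |(Bf x vlim) (v (ψ n) - vlim)| := abs_add_le _ _
        _ ≤ M * ‖v (ψ n) - vlim‖ + M * ‖v (ψ n) - vlim‖ := by
            rw [← Real.norm_eq_abs, ← Real.norm_eq_abs]; exact add_le_add b1 b2
        _ ≤ α/8 + α/8 := add_le_add b3 b3
        _ = α/4 := by ring
    have e3 : α/2 ≤ Bf ξ (v (ψ n)) (v (ψ n)) := by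
      rw [abs_le] at e1 e2
      linarith [e1.1, e2.1]
    rw [hexp]
    nlinarith [sq_nonneg (t (ψ n))]
  -- lower bound on f (z (ψ n))
  have hflow : (t (ψ n))^2 * (α/2) / 4 ≤ f (z (ψ n)) := by
    have h := aux_lower_bound f hf hfpos (p (ψ n)) (z (ψ n) - p (ψ n))
      (hfderiv0 _ (hfp0 (ψ n))) ((t (ψ n))^2 * (α/2)) (by positivity) hhess
    have hpw : p (ψ n) + (z (ψ n) - p (ψ n)) = z (ψ n) := by abel
    rwa [hpw] at h
  -- upper bound on the gradient
  have hpball : p (ψ n) ∈ Metric.ball x r₂ := by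
    have := hseg 0 ⟨le_refl 0, zero_le_one⟩
    simpa using this
  have hzball : z (ψ n) ∈ Metric.ball x r₂ := by
    have h := hseg 1 ⟨zero_le_one, le_refl 1⟩
    rw [one_smul] at h
    have hpw : p (ψ n) + (z (ψ n) - p (ψ n)) = z (ψ n) := by abel
    rw [hpw] at h
    exact h
  have hgrad : ‖fderiv ℝ f (z (ψ n))‖ ≤ L * t (ψ n) := by
    have hmvt2 := Convex.norm_image_sub_le_of_norm_hasFDerivWithin_le (s := Metric.ball x r₂)
      (f := fderiv ℝ f) (f' := Bf) (C := L)
      (fun y _ => (hdf1 y).hasFDerivAt.hasFDerivWithinAt)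
      (fun y hy => by
        have h1 : ‖Bf y - Bf x‖ < α/4 := by
          rw [← dist_eq_norm (Bf y) (Bf x)]; exact hr₂ (mem_ball.mp hy)
        calc ‖Bf y‖ = ‖(Bf y - Bf x) + Bf x‖ := by rw [sub_add_cancel]
          _ ≤ ‖Bf y - Bf x‖ + ‖Bf x‖ := norm_add_le (Bf y - Bf x) (Bf x)
          _ ≤ L := by rw [hL_def, hM_def]; linarith)
      (convex_ball x r₂) hpball hzball
    rw [hfderiv0 _ (hfp0 (ψ n)), sub_zero, ← dist_eq_norm] at hmvt2
    exact hmvt2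
  -- contradiction
  have hzi' := hzi (ψ n)
  have hsq : t (ψ n) * Real.sqrt (α/8) ≤ Real.sqrt (f (z (ψ n))) := by
    have heq : Real.sqrt ((t (ψ n))^2 * (α/8)) = t (ψ n) * Real.sqrt (α/8) := by
      rw [Real.sqrt_mul (sq_nonneg _), Real.sqrt_sq htn.le]
    rw [← heq]
    exact Real.sqrt_le_sqrt (by nlinarith)
  have h6 : L < ((n:ℝ)+1) * Real.sqrt (α/8) := by
    have h1 : L / Real.sqrt (α/8) < (n₁:ℝ) := hn₁
    have hcast : (n₁:ℝ) ≤ (n:ℝ) := Nat.cast_le.mpr hn4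
    rw [div_lt_iff₀ hs8] at h1
    nlinarith [hs8]
  have h7 : ((n:ℝ)+1) ≤ ((ψ n : ℝ)+1) := by
    have := hψmono.le_apply (x := n)
    have : (n:ℝ) ≤ (ψ n : ℝ) := Nat.cast_le.mpr this
    linarith
  have hfinal : ((ψ n : ℝ)+1) * Real.sqrt (f (z (ψ n))) <
      ((ψ n : ℝ)+1) * Real.sqrt (f (z (ψ n))) := by
    calc ((ψ n : ℝ)+1) * Real.sqrt (f (z (ψ n)))
        < ‖gradient f (z (ψ n))‖ := hzi'
      _ = ‖fderiv ℝ f (z (ψ n))‖ := grad_norm _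
      _ ≤ L * t (ψ n) := hgrad
      _ < (((n:ℝ)+1) * Real.sqrt (α/8)) * t (ψ n) := mul_lt_mul_of_pos_right h6 htn
      _ ≤ (((ψ n : ℝ)+1) * Real.sqrt (α/8)) * t (ψ n) :=
          mul_le_mul_of_nonneg_right (mul_le_mul_of_nonneg_right h7 hs8.le) htn.le
      _ = ((ψ n : ℝ)+1) * (t (ψ n) * Real.sqrt (α/8)) := by ring
      _ ≤ ((ψ n : ℝ)+1) * Real.sqrt (f (z (ψ n))) := by
          apply mul_le_mul_of_nonneg_left hsq (by positivity)
  exact lt_irrefl _ hfinal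
end

section
/- Let N ⊂ ℝ^k be a smooth compact submanifold and f : ℝ^k → [0,∞) smooth vanishing nondegenerately on N = {f = 0}. Then there exist δ > 0 and C > 0 such that for every z with dist(z,N) < δ and every ξ ∈ ℝ^k, ξ · ∇²f(z) ξ ≥ −C |ξ|² |z − π(z)|, where π is the nearest-point projection onto N. -/
open scoped BigOperators

/-- Second derivative along any direction is nonnegative at a global minimum. -/
lemma second_fderiv_nonneg_at_min {E : Type*} [NormedAddCommGroup E] [NormedSpace ℝ E]
    {f : E → ℝ} (hf : ContDiff ℝ (⊤ : ℕ∞) f) {x : E} (hmin : ∀ y, f x ≤ f y) (ξ : E) :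
    0 ≤ fderiv ℝ (fderiv ℝ f) x ξ ξ := by
  by_contra hneg
  push_neg at hneg
  set g : ℝ → ℝ := fun t => f (x + t • ξ) with hg
  have hφ : ∀ t : ℝ, HasDerivAt (fun s : ℝ => x + s • ξ) ξ t := by
    intro t
    simpa using ((hasDerivAt_id t).smul_const ξ).const_add x
  have hφc : Continuous fun t : ℝ => x + t • ξ := by continuity
  have hfd : ContDiff ℝ (⊤ : ℕ∞) (fderiv ℝ f) := hf.fderiv_right (by simp)
  have hfdd : Continuous (fderiv ℝ (fderiv ℝ f)) := (hfd.fderiv_right (m := (⊤ : ℕ∞)) (by simp)).continuous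
  have hg' : ∀ t : ℝ, HasDerivAt g (fderiv ℝ f (x + t • ξ) ξ) t := fun t =>
    (hf.differentiable (by simp) _).hasFDerivAt.comp_hasDerivAt t (hφ t)
  have hdg : deriv g = fun t => fderiv ℝ f (x + t • ξ) ξ := funext fun t => (hg' t).deriv
  have hg'' : ∀ t : ℝ, HasDerivAt (deriv g) (fderiv ℝ (fderiv ℝ f) (x + t • ξ) ξ ξ) t := by
    intro t
    have h1 : HasDerivAt (fun s : ℝ => fderiv ℝ f (x + s • ξ))
        (fderiv ℝ (fderiv ℝ f) (x + t • ξ) ξ) t :=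
      (hfd.differentiable (by simp) _).hasFDerivAt.comp_hasDerivAt t (hφ t)
    have h2 := (ContinuousLinearMap.apply ℝ ℝ ξ).hasFDerivAt.comp_hasDerivAt t h1
    rw [hdg]
    exact h2
  have hcont : Continuous fun t : ℝ => fderiv ℝ (fderiv ℝ f) (x + t • ξ) ξ ξ :=
    (((hfdd.comp hφc).clm_apply continuous_const).clm_apply continuous_const)
  -- get a neighborhood where the second derivative is negative
  have h00 : (fun t : ℝ => fderiv ℝ (fderiv ℝ f) (x + t • ξ) ξ ξ) 0 < 0 := by
    simpa using hneg
  have hev : ∀ᶠ t in nhds (0 : ℝ), fderiv ℝ (fderiv ℝ f) (x + t • ξ) ξ ξ < 0 :=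
    (hcont.continuousAt (x := 0)).eventually_lt continuousAt_const h00
  obtain ⟨ε, hε, hball⟩ := Metric.eventually_nhds_iff.1 hev
  have hε2 : 0 < ε / 2 := by linarith
  -- deriv g is strictly decreasing on [0, ε/2]
  have hdgc : Continuous (deriv g) := by
    rw [hdg]
    exact ((hfd.continuous.comp hφc).clm_apply continuous_const)
  have hanti : StrictAntiOn (deriv g) (Set.Icc 0 (ε / 2)) := by
    apply strictAntiOn_of_deriv_neg (convex_Icc _ _) hdgc.continuousOn
    intro t ht
    rw [interior_Icc] at ht
    have hd : dist t (0 : ℝ) < ε := by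
      rw [Real.dist_eq, sub_zero, abs_of_pos ht.1]
      linarith [ht.2]
    rw [(hg'' t).deriv]
    exact hball hd
  have hdg0 : deriv g 0 = 0 := by
    have hloc : IsLocalMin g 0 := Filter.Eventually.of_forall fun t => by
      simpa [hg] using hmin (x + t • ξ)
    exact hloc.deriv_eq_zero
  have hdgneg : ∀ t ∈ Set.Ioo (0 : ℝ) (ε / 2), deriv g t < 0 := by
    intro t ht
    have := hanti (Set.mem_Icc.2 ⟨le_refl 0, le_of_lt hε2⟩)
      (Set.mem_Icc.2 ⟨le_of_lt ht.1, le_of_lt ht.2⟩) ht.1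
    rwa [hdg0] at this
  have hganti : StrictAntiOn g (Set.Icc 0 (ε / 2)) := by
    apply strictAntiOn_of_deriv_neg (convex_Icc _ _)
      (hf.continuous.comp hφc).continuousOn
    intro t ht
    rw [interior_Icc] at ht
    exact hdgneg t ht
  have hlt : g (ε / 2) < g 0 :=
    hganti (Set.mem_Icc.2 ⟨le_refl 0, le_of_lt hε2⟩)
      (Set.mem_Icc.2 ⟨le_of_lt hε2, le_refl _⟩) hε2
  have : f x ≤ g (ε / 2) := hmin _
  have hg0 : g 0 = f x := by simp [hg]
  linarith

set_option maxHeartbeats 1000000 in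
/-- Let `N = {f = 0}` be the compact vacuum manifold of the smooth
nonnegative potential `f`, vanishing nondegenerately on `N` (Hessian positive definite
on normal directions, the normal space at `x ∈ N` being `ker Dπ(x)` for the
nearest-point projection `π`).  Then there exist `δ > 0` and `C > 0` such that for all
`z` with `dist(z, N) < δ` and all `ξ ∈ ℝ^k`,
`ξ · ∇²f(z) ξ ≥ −C |ξ|² |z − π(z)|`. -/
theorem hessian_almost_nonneg_near_vacuum {k : ℕ}
    (N : Set (EuclideanSpace ℝ (Fin k))) (hN : IsCompact N)
    (f : EuclideanSpace ℝ (Fin k) → ℝ) (hf : ContDiff ℝ (⊤ : ℕ∞) f)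
    (hfpos : ∀ z, 0 ≤ f z) (hzero : {z | f z = 0} = N)
    (δ₁ : ℝ) (hδ₁ : 0 < δ₁)
    (π : EuclideanSpace ℝ (Fin k) → EuclideanSpace ℝ (Fin k))
    (hπN : ∀ z, Metric.infDist z N < δ₁ →
      π z ∈ N ∧ dist z (π z) = Metric.infDist z N)
    (hπs : ContDiffOn ℝ (⊤ : ℕ∞) π {z | Metric.infDist z N < δ₁})
    (hnondeg : ∀ x ∈ N, ∀ v : EuclideanSpace ℝ (Fin k),
      fderiv ℝ π x v = 0 → v ≠ 0 → 0 < iteratedFDeriv ℝ 2 f x ![v, v]) :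
    ∃ δ > 0, δ ≤ δ₁ ∧ ∃ C > 0, ∀ z, Metric.infDist z N < δ →
      ∀ ξ : EuclideanSpace ℝ (Fin k),
        -C * ‖ξ‖ ^ 2 * ‖z - π z‖ ≤ iteratedFDeriv ℝ 2 f z ![ξ, ξ] := by
  classical
  have hδ2 : (0:ℝ) < δ₁ / 2 := by linarith
  rcases N.eq_empty_or_nonempty with hNe | hNne
  · -- degenerate case: N empty contradicts hπN
    refine ⟨δ₁ / 2, hδ2, by linarith, 1, one_pos, fun z hz ξ => ?_⟩
    have h0 : Metric.infDist z N < δ₁ := by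
      have : Metric.infDist z N = 0 := by simp [hNe, Metric.infDist_empty]
      linarith
    exact absurd ((hπN z h0).1) (by simp [hNe])
  -- main case
  set H : EuclideanSpace ℝ (Fin k) → EuclideanSpace ℝ (Fin k) →L[ℝ] EuclideanSpace ℝ (Fin k) →L[ℝ] ℝ := fderiv ℝ (fderiv ℝ f) with hH
  have hfd : ContDiff ℝ (⊤ : ℕ∞) (fderiv ℝ f) := hf.fderiv_right (by simp)
  have hHd : ContDiff ℝ (⊤ : ℕ∞) H := hfd.fderiv_right (m := (⊤ : ℕ∞)) (by simp)
  -- compact neighborhood K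
  set K : Set (EuclideanSpace ℝ (Fin k)) := {z | Metric.infDist z N ≤ δ₁ / 2} with hK
  have hKclosed : IsClosed K := isClosed_le (Metric.continuous_infDist_pt N) continuous_const
  obtain ⟨R, hR⟩ := hN.isBounded.subset_closedBall 0
  have hKsub : K ⊆ Metric.closedBall (0 : EuclideanSpace ℝ (Fin k)) (R + δ₁ / 2) := by
    intro z hz
    obtain ⟨y, hyN, hyd⟩ := hN.exists_infDist_eq_dist hNne z
    have h1 : dist z y ≤ δ₁ / 2 := by rw [← hyd]; exact hz
    have h2 : dist y 0 ≤ R := hR hyN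
    have := dist_triangle z y (0 : EuclideanSpace ℝ (Fin k))
    simp only [Metric.mem_closedBall]
    linarith
  have hKcompact : IsCompact K :=
    (isCompact_closedBall (0 : EuclideanSpace ℝ (Fin k)) (R + δ₁ / 2)).of_isClosed_subset hKclosed hKsub
  -- bound on derivative of H over K
  obtain ⟨M, hM⟩ := hKcompact.exists_bound_of_continuousOn
    ((hHd.fderiv_right (m := (⊤ : ℕ∞)) (by simp)).continuous.continuousOn (s := K))
  set C : ℝ := max M 0 + 1 with hC
  have hCpos : 0 < C := by positivity
  have hMC : ∀ x ∈ K, _ ≤ C := fun x hx =>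
    le_trans (hM x hx) (by simp [hC]; linarith [le_max_left M 0])
  refine ⟨δ₁ / 2, hδ2, by linarith, C, hCpos, fun z hz ξ => ?_⟩
  have hzδ₁ : Metric.infDist z N < δ₁ := by linarith
  obtain ⟨hπz, hπd⟩ := hπN z hzδ₁
  have hfπz : f (π z) = 0 := by rw [← hzero] at hπz; exact hπz
  have hmin : ∀ y, f (π z) ≤ f y := fun y => hfπz ▸ hfpos y
  -- PSD at π z
  have hPSD : 0 ≤ H (π z) ξ ξ := second_fderiv_nonneg_at_min hf hmin ξ
  -- segment from π z to z stays in K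
  have hseg : segment ℝ (π z) z ⊆ K := by
    intro w hw
    have hwball : w ∈ Metric.closedBall (π z) (dist z (π z)) := by
      apply (convex_closedBall (π z) (dist z (π z))).segment_subset _ _ hw
      · simp [Metric.mem_closedBall, dist_nonneg]
      · simp [Metric.mem_closedBall]
    have h1 : Metric.infDist w N ≤ dist w (π z) := Metric.infDist_le_dist_of_mem hπz
    have h2 : dist w (π z) ≤ dist z (π z) := hwball
    rw [hπd] at h2
    exact le_trans h1 (le_trans h2 (le_of_lt hz))
  -- mean value bound for H on the segment
  have hHdiff : ∀ x ∈ segment ℝ (π z) z, DifferentiableAt ℝ H x := fun x _ =>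
    hHd.differentiable (by simp) x
  have hmv : ‖H z - H (π z)‖ ≤ C * ‖z - π z‖ :=
    (convex_segment (π z) z).norm_image_sub_le_of_norm_fderiv_le hHdiff
      (fun x hx => hMC x (hseg hx)) (left_mem_segment ℝ (π z) z)
      (right_mem_segment ℝ (π z) z)
  -- conclude
  have hEval : |(H z - H (π z)) ξ ξ| ≤ ‖H z - H (π z)‖ * ‖ξ‖ * ‖ξ‖ := by
    calc |(H z - H (π z)) ξ ξ| ≤ ‖(H z - H (π z)) ξ‖ * ‖ξ‖ :=
          ((H z - H (π z)) ξ).le_opNorm ξ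
      _ ≤ ‖H z - H (π z)‖ * ‖ξ‖ * ‖ξ‖ := by
          have := (H z - H (π z)).le_opNorm ξ
          nlinarith [norm_nonneg ξ, norm_nonneg ((H z - H (π z)) ξ)]
  have hsub : (H z - H (π z)) ξ ξ = H z ξ ξ - H (π z) ξ ξ := by simp
  rw [show iteratedFDeriv ℝ 2 f z ![ξ, ξ] = H z ξ ξ by
    rw [iteratedFDeriv_two_apply]; simp [hH]]
  rw [hsub] at hEval
  have habs := abs_le.1 hEval
  have hnn : 0 ≤ ‖ξ‖ := norm_nonneg ξ
  nlinarith [mul_le_mul_of_nonneg_right hmv (mul_nonneg hnn hnn), habs.1, hPSD,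
    norm_nonneg (z - π z)]
end

section
/- Let K > 0 and let ψ : (0,1) → ℝ be a differentiable function satisfying ψ'(ρ) ≥ K(1 − ψ(2ρ)) for all ρ ∈ (0,1/2). Suppose ψ ≥ 0, ψ is continuous, and ψ(ρ) ≤ 1/2 for all ρ ∈ [ρ₀, 2ρ₀] for some ρ₀ ∈ (0,1/4). Then ψ(ρ) ≤ ψ(ρ₀) ≤ 1/2 for all ρ ∈ (0, ρ₀], and ψ is increasing on (0, ρ₀]. -/
/-- Let `K > 0` and let `ψ` be differentiable on `(0,1)` with
`ψ'(ρ) ≥ K(1 − ψ(2ρ))` for `ρ ∈ (0,1/2)`, `ψ ≥ 0`, and `ψ ≤ 1/2` on `[ρ₀, 2ρ₀]` for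
some `ρ₀ ∈ (0,1/4)`.  Then `ψ(ρ) ≤ ψ(ρ₀) ≤ 1/2` for all `ρ ∈ (0, ρ₀]`, and `ψ` is
increasing on `(0, ρ₀]`. -/
theorem monotonicity_bootstrap (K : ℝ) (hK : 0 < K) (ψ ψ' : ℝ → ℝ)
    (hdiff : ∀ ρ ∈ Set.Ioo (0:ℝ) 1, HasDerivAt ψ (ψ' ρ) ρ)
    (hineq : ∀ ρ ∈ Set.Ioo (0:ℝ) (1/2), K * (1 - ψ (2 * ρ)) ≤ ψ' ρ)
    (hpos : ∀ ρ ∈ Set.Ioo (0:ℝ) 1, 0 ≤ ψ ρ)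
    (ρ₀ : ℝ) (hρ₀ : ρ₀ ∈ Set.Ioo (0:ℝ) (1/4))
    (hsmall : ∀ ρ ∈ Set.Icc ρ₀ (2 * ρ₀), ψ ρ ≤ 1/2) :
    (∀ ρ ∈ Set.Ioc (0:ℝ) ρ₀, ψ ρ ≤ ψ ρ₀ ∧ ψ ρ₀ ≤ 1/2) ∧
    StrictMonoOn ψ (Set.Ioc (0:ℝ) ρ₀) := by
  obtain ⟨hρ₀pos, hρ₀lt⟩ := hρ₀
  -- one step of downward propagation
  have step : ∀ b : ℝ, 0 < b → b ≤ ρ₀ → (∀ x ∈ Set.Icc b (2 * ρ₀), ψ x ≤ 1/2) →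
      ∀ x ∈ Set.Icc (b/2) (2 * ρ₀), ψ x ≤ 1/2 := by
    intro b hb hbρ₀ hIH x ⟨hx1, hx2⟩
    by_cases hxb : b ≤ x
    · exact hIH x ⟨hxb, hx2⟩
    push_neg at hxb
    have hmono : StrictMonoOn ψ (Set.Icc (b/2) b) := by
      apply strictMonoOn_of_deriv_pos (convex_Icc _ _)
      · intro y hy
        have : y ∈ Set.Ioo (0:ℝ) 1 := ⟨by linarith [hy.1], by linarith [hy.2]⟩
        exact (hdiff y this).continuousAt.continuousWithinAt
      · rw [interior_Icc]
        intro y hy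
        have hy01 : y ∈ Set.Ioo (0:ℝ) 1 := ⟨by linarith [hy.1], by linarith [hy.2]⟩
        rw [(hdiff y hy01).deriv]
        have hy12 : y ∈ Set.Ioo (0:ℝ) (1/2) := ⟨by linarith [hy.1], by linarith [hy.2]⟩
        have h2y : ψ (2 * y) ≤ 1/2 := hIH (2 * y) ⟨by linarith [hy.1], by linarith [hy.2]⟩
        have := hineq y hy12
        nlinarith
    have : ψ x ≤ ψ b := by
      rcases eq_or_lt_of_le (le_of_lt hxb) with h | h
      · rw [h]
      · exact le_of_lt (hmono ⟨hx1, le_of_lt hxb⟩ ⟨by linarith, le_refl _⟩ h)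
    calc ψ x ≤ ψ b := this
    _ ≤ 1/2 := hIH b ⟨le_refl _, by linarith⟩
  -- iterate
  have all : ∀ n : ℕ, ∀ x ∈ Set.Icc (ρ₀ / 2 ^ n) (2 * ρ₀), ψ x ≤ 1/2 := by
    intro n
    induction n with
    | zero => simpa using hsmall
    | succ n ih =>
      have h1 : (0:ℝ) < ρ₀ / 2 ^ n := by positivity
      have h2 : ρ₀ / 2 ^ n ≤ ρ₀ := by
        apply div_le_self (le_of_lt hρ₀pos)
        exact one_le_pow₀ (by norm_num)
      have := step (ρ₀ / 2 ^ n) h1 h2 ih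
      intro x hx
      apply this x
      have : ρ₀ / 2 ^ (n + 1) = ρ₀ / 2 ^ n / 2 := by
        rw [pow_succ]; ring
      rwa [this] at hx
  -- smallness on all of (0, 2ρ₀]
  have key : ∀ x ∈ Set.Ioc (0:ℝ) (2 * ρ₀), ψ x ≤ 1/2 := by
    intro x ⟨hx0, hx2⟩
    obtain ⟨n, hn⟩ := pow_unbounded_of_one_lt (ρ₀ / x) (by norm_num : (1:ℝ) < 2)
    have : ρ₀ / 2 ^ n ≤ x := by
      rw [div_le_iff₀ (by positivity)]
      rw [div_lt_iff₀ hx0] at hn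
      nlinarith
    exact all n x ⟨this, hx2⟩
  -- positive derivative on (0, ρ₀]
  have hd : ∀ σ ∈ Set.Ioc (0:ℝ) ρ₀, 0 < ψ' σ := by
    intro σ ⟨hσ0, hσρ₀⟩
    have hσ12 : σ ∈ Set.Ioo (0:ℝ) (1/2) := ⟨hσ0, by linarith⟩
    have h2σ : ψ (2 * σ) ≤ 1/2 := key (2 * σ) ⟨by linarith, by linarith⟩
    have := hineq σ hσ12
    nlinarith
  have smono : StrictMonoOn ψ (Set.Ioc (0:ℝ) ρ₀) := by
    apply strictMonoOn_of_deriv_pos (convex_Ioc _ _)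
    · intro y hy
      have : y ∈ Set.Ioo (0:ℝ) 1 := ⟨hy.1, by linarith [hy.2]⟩
      exact (hdiff y this).continuousAt.continuousWithinAt
    · rw [interior_Ioc]
      intro y hy
      have hy01 : y ∈ Set.Ioo (0:ℝ) 1 := ⟨hy.1, by linarith [hy.2]⟩
      rw [(hdiff y hy01).deriv]
      exact hd y ⟨hy.1, le_of_lt hy.2⟩
  refine ⟨fun ρ hρ => ⟨?_, hsmall ρ₀ ⟨le_refl _, by linarith⟩⟩, smono⟩
  rcases eq_or_lt_of_le hρ.2 with h | h
  · rw [h]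
  · exact le_of_lt (smono hρ ⟨hρ₀pos, le_refl _⟩ h)
end
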